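/- Let N ≥ 3 and let I(x) = ∫_{ℝ^{N-1}} e^{-‖x - y‖ - ‖y‖}·(1 + ‖x - y‖)^{(N-4)/2}/‖x - y‖^{N-3} dy. Then there is a constant C > 0 such that I(x) ≤ C·e^{-‖x‖}·‖x‖^{N/2} for all x with ‖x‖ ≥ 1. -/

import Mathlib

/-!
Write `u = ‖x - y‖`, `v = ‖y‖`, `r = ‖x‖ ≥ 1`, so that `r ≤ u + v` and `u ≤ r + v`.
Near the pole, `u < 2r`, the triangle inequality gives `e^{-u-v} ≤ e^{-r}`, and the kernel is at
most `e^{-r} (1 + 2r)^{a⁺} u^{a⁻ - s}` (with `a⁺ = max a 0`, `a⁻ = min a 0`), whose integral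
over the ball of radius `2r` scales like `r^{a⁺} r^{d + a⁻ - s} = r^{a + d - s}`.
Far from it, `u ≥ 2r` forces `v ≥ r`, so `e^{-u-v} ≤ e^{-r} e^{-u}`, and what remains is
`e^{-r}` times a fixed integrable function of `u`.
With `d = N - 1`, `a = (N - 4)/2`, `s = N - 3` the exponent `a + d - s` is `N/2`.
-/

open Real MeasureTheory Set Metric Module

section KernelBounds

variable {a s r u v : ℝ}

lemma exp_mul_one_add_rpow_div_rpow_le_of_le_two_mul (hu : 0 < u) (hur : u ≤ 2 * r)
    (htri : r ≤ u + v) :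
    exp (-u - v) * (1 + u) ^ a / u ^ s ≤
      exp (-r) * ((1 + 2 * r) ^ max a 0 * u ^ (min a 0 - s)) := by
  have hsplit : (1 + u) ^ a = (1 + u) ^ max a 0 * (1 + u) ^ min a 0 := by
    rw [← rpow_add (by linarith), max_add_min, add_zero]
  have hmax : (1 + u) ^ max a 0 ≤ (1 + 2 * r) ^ max a 0 :=
    rpow_le_rpow (by linarith) (by linarith) (le_max_right a 0)
  have hmin : (1 + u) ^ min a 0 / u ^ s ≤ u ^ (min a 0 - s) := by
    rw [rpow_sub hu]
    exact div_le_div_of_nonneg_right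
      (rpow_le_rpow_of_nonpos hu (by linarith) (min_le_right a 0)) (rpow_nonneg hu.le s)
  calc exp (-u - v) * (1 + u) ^ a / u ^ s
      = exp (-u - v) * ((1 + u) ^ max a 0 * ((1 + u) ^ min a 0 / u ^ s)) := by
        rw [hsplit]; ring
    _ ≤ exp (-r) * ((1 + 2 * r) ^ max a 0 * u ^ (min a 0 - s)) := by
        have h2r : 0 ≤ 1 + 2 * r := by linarith
        have h1u := rpow_nonneg (show (0 : ℝ) ≤ 1 + u by linarith)
        gcongr ?_ * (?_ * ?_)
        exact exp_le_exp.2 (by linarith)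

lemma exp_mul_one_add_rpow_div_rpow_le_of_two_mul_le (hs : 0 ≤ s) (hu : 1 ≤ u) (hur : 2 * r ≤ u)
    (htri : u ≤ r + v) :
    exp (-u - v) * (1 + u) ^ a / u ^ s ≤ exp (-r) * (2 ^ max a 0 * (u ^ max a 0 * exp (-u))) := by
  have hexp : exp (-u - v) ≤ exp (-r) * exp (-u) := by
    rw [← exp_add]; gcongr; linarith
  have hpow : (1 + u) ^ a ≤ (2 * u) ^ max a 0 :=
    (rpow_le_rpow_of_exponent_le (by linarith) (le_max_left a 0)).trans
      (rpow_le_rpow (by linarith) (by linarith) (le_max_right a 0))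
  calc exp (-u - v) * (1 + u) ^ a / u ^ s ≤ exp (-u - v) * (1 + u) ^ a :=
        div_le_self (by positivity) (one_le_rpow hu hs)
    _ ≤ exp (-r) * exp (-u) * (2 * u) ^ max a 0 := by gcongr
    _ = _ := by rw [mul_rpow (by norm_num) (by linarith)]; ring

end KernelBounds

section RadialIntegrals

variable {E : Type*} [NormedAddCommGroup E] [NormedSpace ℝ E] [MeasurableSpace E] [BorelSpace E]
  [FiniteDimensional ℝ E] (μ : Measure E) [μ.IsAddHaarMeasure]

lemma setIntegral_ball_norm_rpow {R : ℝ} (hR : 0 < R) (p : ℝ) :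
    ∫ z in ball (0 : E) R, ‖z‖ ^ p ∂μ =
      R ^ (finrank ℝ E + p) * ∫ z in ball (0 : E) 1, ‖z‖ ^ p ∂μ := by
  have h := Measure.setIntegral_comp_smul_of_pos μ (fun z : E => ‖z‖ ^ p) (ball 0 1) hR
  simp only [smul_unitBall_of_pos hR, norm_smul, Real.norm_of_nonneg hR.le,
    mul_rpow hR.le (norm_nonneg _), integral_const_mul, smul_eq_mul] at h
  rw [rpow_add hR, rpow_natCast, mul_assoc, h, ← mul_assoc, mul_inv_cancel₀ (by positivity),
    one_mul]

lemma integrableOn_ball_norm_rpow [Nontrivial E] {p : ℝ} (hp : -(finrank ℝ E : ℝ) < p) (R : ℝ) :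
    IntegrableOn (‖·‖ ^ p) (ball (0 : E) R) μ :=
  integrableOn_ball_of_norm_le_rpow finrank_pos (C := 1) (α := -p) (by linarith)
    (.of_forall fun z => by simp [abs_of_nonneg (rpow_nonneg (norm_nonneg z) _)])
    (measurable_norm.pow_const _).aestronglyMeasurable

lemma integrable_norm_rpow_mul_exp_neg_norm [Nontrivial E] {b : ℝ}
    (hb : -(finrank ℝ E : ℝ) < b) :
    Integrable (fun z : E => ‖z‖ ^ b * exp (-‖z‖)) μ := by
  rw [integrable_fun_norm_addHaar μ (f := fun ρ => ρ ^ b * exp (-ρ))]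
  refine (GammaIntegral_convergent (s := finrank ℝ E + b) (by linarith)).congr_fun
    (fun ρ (hρ : 0 < ρ) => ?_) measurableSet_Ioi
  have hd : 1 ≤ finrank ℝ E := finrank_pos
  rw [smul_eq_mul, ← rpow_natCast, Nat.cast_sub hd, ← mul_assoc, ← rpow_add hρ]
  ring_nf

end RadialIntegrals

section Majorant

variable {E : Type*} [NormedAddCommGroup E] {a s r : ℝ}

noncomputable def kernelMajorant (a s r : ℝ) (z : E) : ℝ :=
  exp (-r) * ((1 + 2 * r) ^ max a 0 * (ball (0 : E) (2 * r)).indicator (‖·‖ ^ (min a 0 - s)) z +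
    2 ^ max a 0 * (‖z‖ ^ max a 0 * exp (-‖z‖)))

lemma integrand_le_kernelMajorant (hs : 0 ≤ s) {x y : E} (hx : 1 ≤ ‖x‖) (hxy : y ≠ x) :
    exp (-‖x - y‖ - ‖y‖) * (1 + ‖x - y‖) ^ a / ‖x - y‖ ^ s ≤ kernelMajorant a s ‖x‖ (x - y) := by
  have hu : 0 < ‖x - y‖ := norm_pos_iff.2 (sub_ne_zero.2 hxy.symm)
  have hnear : 0 ≤ (ball (0 : E) (2 * ‖x‖)).indicator (‖·‖ ^ (min a 0 - s)) (x - y) :=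
    indicator_nonneg (fun z _ => rpow_nonneg (norm_nonneg z) _) _
  have hfar : 0 ≤ 2 ^ max a 0 * (‖x - y‖ ^ max a 0 * exp (-‖x - y‖)) := by positivity
  rw [kernelMajorant]
  by_cases hball : x - y ∈ ball (0 : E) (2 * ‖x‖)
  · rw [indicator_of_mem hball]
    refine (exp_mul_one_add_rpow_div_rpow_le_of_le_two_mul hu (mem_ball_zero_iff.1 hball).le
      (norm_le_norm_sub_add x y)).trans ?_
    gcongr
    exact le_add_of_nonneg_right hfar
  · rw [indicator_of_notMem hball, mul_zero, zero_add]
    have hur : 2 * ‖x‖ ≤ ‖x - y‖ := by simpa using hball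
    exact exp_mul_one_add_rpow_div_rpow_le_of_two_mul_le hs (by linarith) hur (norm_sub_le x y)

variable [NormedSpace ℝ E] [MeasurableSpace E] [BorelSpace E] [FiniteDimensional ℝ E]
  (μ : Measure E) [μ.IsAddHaarMeasure]

lemma integrable_kernelMajorant [Nontrivial E] (hsd : s - min a 0 < finrank ℝ E) :
    Integrable (kernelMajorant (E := E) a s r) μ := by
  have hd : (0 : ℝ) < finrank ℝ E := mod_cast finrank_pos
  have hnear := integrableOn_ball_norm_rpow μ (p := min a 0 - s) (by linarith) (2 * r)
  have hfar := integrable_norm_rpow_mul_exp_neg_norm μ (b := max a 0)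
    ((neg_neg_of_pos hd).trans_le (le_max_right a 0))
  exact (((hnear.integrable_indicator measurableSet_ball).const_mul _).add
    (hfar.const_mul _)).const_mul _

lemma integral_kernelMajorant [Nontrivial E] (hsd : s - min a 0 < finrank ℝ E) (hr : 0 < r) :
    ∫ z, kernelMajorant a s r z ∂μ =
      exp (-r) * ((1 + 2 * r) ^ max a 0 * ((2 * r) ^ (finrank ℝ E + (min a 0 - s)) *
          ∫ z in ball (0 : E) 1, ‖z‖ ^ (min a 0 - s) ∂μ) +
        2 ^ max a 0 * ∫ z, ‖z‖ ^ max a 0 * exp (-‖z‖) ∂μ) := by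
  have hd : (0 : ℝ) < finrank ℝ E := mod_cast finrank_pos
  have hnear := integrableOn_ball_norm_rpow μ (p := min a 0 - s) (by linarith) (2 * r)
  have hfar := integrable_norm_rpow_mul_exp_neg_norm μ (b := max a 0)
    ((neg_neg_of_pos hd).trans_le (le_max_right a 0))
  simp only [kernelMajorant]
  rw [integral_const_mul,
    integral_add ((hnear.integrable_indicator measurableSet_ball).const_mul _) (hfar.const_mul _),
    integral_const_mul, integral_const_mul, integral_indicator measurableSet_ball,
    setIntegral_ball_norm_rpow μ (by positivity)]

end Majorant

lemma one_add_two_mul_rpow_mul_add_le {r b q c₁ c₂ : ℝ} (hr : 1 ≤ r) (hb : 0 ≤ b) (hq : 0 ≤ q)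
    (hc₁ : 0 ≤ c₁) (hc₂ : 0 ≤ c₂) :
    (1 + 2 * r) ^ b * ((2 * r) ^ q * c₁) + 2 ^ b * c₂ ≤
      (3 ^ b * 2 ^ q * c₁ + 2 ^ b * c₂) * r ^ (b + q) := by
  have h3 : (1 + 2 * r) ^ b ≤ 3 ^ b * r ^ b := by
    rw [← mul_rpow (by norm_num) (by linarith)]
    exact rpow_le_rpow (by linarith) (by linarith) hb
  have h1 : 1 ≤ r ^ b * r ^ q := by
    rw [← rpow_add (by linarith)]; exact one_le_rpow hr (by linarith)
  rw [mul_rpow (by norm_num) (by linarith), rpow_add (by linarith)]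
  calc (1 + 2 * r) ^ b * (2 ^ q * r ^ q * c₁) + 2 ^ b * c₂
      ≤ 3 ^ b * r ^ b * (2 ^ q * r ^ q * c₁) + 2 ^ b * (c₂ * (r ^ b * r ^ q)) := by
        gcongr
        exact le_mul_of_one_le_right hc₂ h1
    _ = _ := by ring

section MainEstimate

variable {E : Type*} [NormedAddCommGroup E] [NormedSpace ℝ E] [MeasurableSpace E] [BorelSpace E]
  [FiniteDimensional ℝ E] (μ : Measure E) [μ.IsAddHaarMeasure] {a s : ℝ}

theorem exists_integral_exp_neg_norm_mul_rpow_le (hs : 0 ≤ s)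
    (hsd : s - min a 0 < finrank ℝ E) :
    ∃ C > 0, ∀ x : E, 1 ≤ ‖x‖ →
      ∫ y, exp (-‖x - y‖ - ‖y‖) * (1 + ‖x - y‖) ^ a / ‖x - y‖ ^ s ∂μ ≤
        C * exp (-‖x‖) * ‖x‖ ^ (a + finrank ℝ E - s) := by
  have hd : (0 : ℝ) < finrank ℝ E := by linarith [min_le_right a 0]
  have : Nontrivial E := nontrivial_of_finrank_pos (R := ℝ) (mod_cast hd)
  set c₁ := ∫ z in ball (0 : E) 1, ‖z‖ ^ (min a 0 - s) ∂μ
  set c₂ := ∫ z, ‖z‖ ^ max a 0 * exp (-‖z‖) ∂μ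
  have hc₁ : 0 ≤ c₁ := setIntegral_nonneg measurableSet_ball fun z _ => by positivity
  have hc₂ : 0 ≤ c₂ := integral_nonneg fun z => by positivity
  set q : ℝ := finrank ℝ E + (min a 0 - s)
  set C₀ := 3 ^ max a 0 * 2 ^ q * c₁ + 2 ^ max a 0 * c₂
  refine ⟨C₀ + 1, by positivity, fun x hx => ?_⟩
  have hae : (fun y => exp (-‖x - y‖ - ‖y‖) * (1 + ‖x - y‖) ^ a / ‖x - y‖ ^ s) ≤ᵐ[μ]
      fun y => kernelMajorant a s ‖x‖ (x - y) :=
    (measure_eq_zero_iff_ae_notMem.1 (measure_singleton x)).mono fun y hy =>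
      integrand_le_kernelMajorant hs hx hy
  have hexponent : max a 0 + q = a + finrank ℝ E - s := by
    linarith [max_add_min a 0]
  calc ∫ y, exp (-‖x - y‖ - ‖y‖) * (1 + ‖x - y‖) ^ a / ‖x - y‖ ^ s ∂μ
      ≤ ∫ y, kernelMajorant a s ‖x‖ (x - y) ∂μ :=
        integral_mono_of_nonneg (.of_forall fun y => by positivity)
          ((integrable_kernelMajorant μ hsd).comp_sub_left x) hae
    _ = exp (-‖x‖) * ((1 + 2 * ‖x‖) ^ max a 0 * ((2 * ‖x‖) ^ q * c₁) + 2 ^ max a 0 * c₂) := by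
        rw [integral_sub_left_eq_self _ μ x, integral_kernelMajorant μ hsd (by linarith)]
    _ ≤ exp (-‖x‖) * (C₀ * ‖x‖ ^ (max a 0 + q)) := by
        gcongr
        exact one_add_two_mul_rpow_mul_add_le hx (le_max_right a 0) (by linarith) hc₁ hc₂
    _ ≤ (C₀ + 1) * exp (-‖x‖) * ‖x‖ ^ (a + finrank ℝ E - s) := by
        rw [hexponent, ← mul_assoc, mul_comm (exp _) C₀]
        gcongr
        linarith

end MainEstimate

theorem stmt5 (N : ℕ) (hN : 3 ≤ N) :
    ∃ C > 0, ∀ x : EuclideanSpace ℝ (Fin (N - 1)), 1 ≤ ‖x‖ →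
      ∫ y : EuclideanSpace ℝ (Fin (N - 1)),
          Real.exp (-‖x - y‖ - ‖y‖) * (1 + ‖x - y‖) ^ (((N : ℝ) - 4) / 2) /
            ‖x - y‖ ^ ((N : ℝ) - 3) ≤
        C * Real.exp (-‖x‖) * ‖x‖ ^ ((N : ℝ) / 2) := by
  have hdim : (finrank ℝ (EuclideanSpace ℝ (Fin (N - 1))) : ℝ) = N - 1 := by
    rw [finrank_euclideanSpace_fin, Nat.cast_sub (by omega), Nat.cast_one]
  have hN' : (3 : ℝ) ≤ N := by exact_mod_cast hN
  have hmin : -1 ≤ min (((N : ℝ) - 4) / 2) 0 := le_min (by linarith) (by norm_num)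
  have hexponent : ((N : ℝ) - 4) / 2 + (N - 1) - (N - 3) = N / 2 := by ring
  rw [← hexponent, ← hdim]
  exact exists_integral_exp_neg_norm_mul_rpow_le volume (by linarith) (by rw [hdim]; linarith)
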